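/- Suppose for each k ∈ ℤ there exist random variables (Φ_k, Φ_k^X, Φ_k^Y, Φ_k^{XY}) on a common probability space such that Φ_k^X and Φ_k^Y each have the distribution of Φ_{k+1}, Φ_k^{XY} has the distribution of Φ_{k+2}, Φ_k^X ≥ Φ_k and Φ_k^Y ≥ Φ_k a.s., and Φ_k^{XY} − Φ_k^X − Φ_k^Y + Φ_k ≥ 0 a.s., with all variables nonnegative. Then for every increasing convex φ : [0,∞) → [0,∞), the function h(k) = E[φ(Φ_k)] satisfies h(k+1) − h(k) ≥ 0 and h(k+2) − 2h(k+1) + h(k) ≥ 0 for all k, provided the expectations are finite. -/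
import Mathlib


open MeasureTheory ProbabilityTheory Filter Set

/-- `X ≤ Y` in the increasing convex order: `E[φ(X)] ≤ E[φ(Y)]` for every
increasing convex `φ : ℝ → ℝ` for which both expectations exist. -/
def IsIcxLE {Ω : Type*} [MeasurableSpace Ω] (μ : Measure Ω) (X Y : Ω → ℝ) : Prop :=
  ∀ φ : ℝ → ℝ, Monotone φ → ConvexOn ℝ Set.univ φ →
    Integrable (fun ω => φ (X ω)) μ → Integrable (fun ω => φ (Y ω)) μ →
    ∫ ω, φ (X ω) ∂μ ≤ ∫ ω, φ (Y ω) ∂μ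

/-- The key deterministic inequality: for a monotone convex `φ` on `[0, ∞)`,
if `0 ≤ a ≤ b, c` and `b + c - a ≤ d` then `φ b + φ c ≤ φ a + φ d`. -/
lemma icx_key {φ : ℝ → ℝ} (hm : MonotoneOn φ (Set.Ici (0:ℝ)))
    (hc : ConvexOn ℝ (Set.Ici (0:ℝ)) φ) {a b c d : ℝ}
    (ha : 0 ≤ a) (hab : a ≤ b) (hac : a ≤ c) (hd : b + c - a ≤ d) :
    φ b + φ c ≤ φ a + φ d := by
  set s := b + c - a with hs_def
  have hbs : b ≤ s := by simp only [hs_def]; linarith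
  have hcs : c ≤ s := by simp only [hs_def]; linarith
  have hs0 : (0:ℝ) ≤ s := le_trans (ha.trans hab) hbs
  have hd0 : (0:ℝ) ≤ d := hs0.trans hd
  have hds : φ s ≤ φ d := hm hs0 hd0 hd
  have hkey : φ b + φ c ≤ φ a + φ s := by
    rcases eq_or_lt_of_le (show a ≤ s from hab.trans hbs) with h | h
    · have hb : b = a := by simp only [hs_def] at h ⊢; linarith
      have hcc : c = a := by simp only [hs_def] at h ⊢; linarith
      rw [hb, hcc, ← h]
    · have hne : s - a ≠ 0 := ne_of_gt (by linarith)
      set θ := (c - a) / (s - a) with hθ_def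
      have ht : θ * (s - a) = c - a := div_mul_cancel₀ _ hne
      have hθ0 : 0 ≤ θ := div_nonneg (by linarith) (by linarith)
      have hθ1 : θ ≤ 1 := by
        rw [hθ_def, div_le_one (by linarith)]; linarith
      have hb_eq : θ * a + (1 - θ) * s = b := by linear_combination -ht + hs_def
      have hc_eq : (1 - θ) * a + θ * s = c := by linear_combination ht
      have h1 := hc.2 (Set.mem_Ici.mpr ha) (Set.mem_Ici.mpr hs0) hθ0
        (by linarith : (0:ℝ) ≤ 1 - θ) (by ring)
      have h2 := hc.2 (Set.mem_Ici.mpr ha) (Set.mem_Ici.mpr hs0)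
        (by linarith : (0:ℝ) ≤ 1 - θ) hθ0 (by ring)
      simp only [smul_eq_mul] at h1 h2
      rw [hb_eq] at h1
      rw [hc_eq] at h2
      linarith
  linarith

theorem stmt_15 {Ω : Type*} [MeasurableSpace Ω] (μ : Measure Ω) [IsProbabilityMeasure μ]
    (Φ ΦX ΦY ΦXY : ℤ → Ω → ℝ)
    (hΦnn : ∀ k ω, 0 ≤ Φ k ω) (hΦXnn : ∀ k ω, 0 ≤ ΦX k ω)
    (hΦYnn : ∀ k ω, 0 ≤ ΦY k ω) (hΦXYnn : ∀ k ω, 0 ≤ ΦXY k ω)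
    (hidX : ∀ k : ℤ, IdentDistrib (ΦX k) (Φ (k + 1)) μ μ)
    (hidY : ∀ k : ℤ, IdentDistrib (ΦY k) (Φ (k + 1)) μ μ)
    (hidXY : ∀ k : ℤ, IdentDistrib (ΦXY k) (Φ (k + 2)) μ μ)
    (hgeX : ∀ k : ℤ, ∀ᵐ ω ∂μ, Φ k ω ≤ ΦX k ω)
    (hgeY : ∀ k : ℤ, ∀ᵐ ω ∂μ, Φ k ω ≤ ΦY k ω)
    (hsuper : ∀ k : ℤ, ∀ᵐ ω ∂μ, 0 ≤ ΦXY k ω - ΦX k ω - ΦY k ω + Φ k ω)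
    (φ : ℝ → ℝ)
    (hφmono : MonotoneOn φ (Set.Ici (0:ℝ)))
    (hφconv : ConvexOn ℝ (Set.Ici (0:ℝ)) φ)
    (hφnn : ∀ x ∈ Set.Ici (0:ℝ), 0 ≤ φ x)
    (hint : ∀ k : ℤ, Integrable (fun ω => φ (Φ k ω)) μ)
    (hintX : ∀ k : ℤ, Integrable (fun ω => φ (ΦX k ω)) μ)
    (hintY : ∀ k : ℤ, Integrable (fun ω => φ (ΦY k ω)) μ)
    (hintXY : ∀ k : ℤ, Integrable (fun ω => φ (ΦXY k ω)) μ) :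
    (∀ k : ℤ, 0 ≤ (∫ ω, φ (Φ (k + 1) ω) ∂μ) - ∫ ω, φ (Φ k ω) ∂μ) ∧
      (∀ k : ℤ, 0 ≤ (∫ ω, φ (Φ (k + 2) ω) ∂μ) - 2 * (∫ ω, φ (Φ (k + 1) ω) ∂μ)
        + ∫ ω, φ (Φ k ω) ∂μ) := by
  -- a measurable monotone extension of φ to all of ℝ
  set ψ : ℝ → ℝ := fun x => φ (max x 0) with hψ_def
  have hψmono : Monotone ψ := fun x y hxy =>
    hφmono (le_max_right x 0) (le_max_right y 0) (max_le_max hxy le_rfl)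
  have hψmeas : Measurable ψ := hψmono.measurable
  have hψeq : ∀ x : ℝ, 0 ≤ x → ψ x = φ x := fun x hx => by
    simp [hψ_def, max_eq_left hx]
  -- distributional equalities of integrals
  have hEX : ∀ k : ℤ, ∫ ω, φ (ΦX k ω) ∂μ = ∫ ω, φ (Φ (k + 1) ω) ∂μ := by
    intro k
    have h := ((hidX k).comp hψmeas).integral_eq
    calc ∫ ω, φ (ΦX k ω) ∂μ = ∫ ω, ψ (ΦX k ω) ∂μ := by
          exact integral_congr_ae (Eventually.of_forall fun ω => (hψeq _ (hΦXnn k ω)).symm)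
      _ = ∫ ω, ψ (Φ (k + 1) ω) ∂μ := h
      _ = ∫ ω, φ (Φ (k + 1) ω) ∂μ := by
          exact integral_congr_ae (Eventually.of_forall fun ω => hψeq _ (hΦnn (k + 1) ω))
  have hEY : ∀ k : ℤ, ∫ ω, φ (ΦY k ω) ∂μ = ∫ ω, φ (Φ (k + 1) ω) ∂μ := by
    intro k
    have h := ((hidY k).comp hψmeas).integral_eq
    calc ∫ ω, φ (ΦY k ω) ∂μ = ∫ ω, ψ (ΦY k ω) ∂μ := by
          exact integral_congr_ae (Eventually.of_forall fun ω => (hψeq _ (hΦYnn k ω)).symm)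
      _ = ∫ ω, ψ (Φ (k + 1) ω) ∂μ := h
      _ = ∫ ω, φ (Φ (k + 1) ω) ∂μ := by
          exact integral_congr_ae (Eventually.of_forall fun ω => hψeq _ (hΦnn (k + 1) ω))
  have hEXY : ∀ k : ℤ, ∫ ω, φ (ΦXY k ω) ∂μ = ∫ ω, φ (Φ (k + 2) ω) ∂μ := by
    intro k
    have h := ((hidXY k).comp hψmeas).integral_eq
    calc ∫ ω, φ (ΦXY k ω) ∂μ = ∫ ω, ψ (ΦXY k ω) ∂μ := by
          exact integral_congr_ae (Eventually.of_forall fun ω => (hψeq _ (hΦXYnn k ω)).symm)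
      _ = ∫ ω, ψ (Φ (k + 2) ω) ∂μ := h
      _ = ∫ ω, φ (Φ (k + 2) ω) ∂μ := by
          exact integral_congr_ae (Eventually.of_forall fun ω => hψeq _ (hΦnn (k + 2) ω))
  constructor
  · intro k
    have hle : ∫ ω, φ (Φ k ω) ∂μ ≤ ∫ ω, φ (ΦX k ω) ∂μ := by
      refine integral_mono_ae (hint k) (hintX k) ?_
      filter_upwards [hgeX k] with ω hω
      exact hφmono (hΦnn k ω) (hΦXnn k ω) hω
    rw [hEX k] at hle
    linarith
  · intro k
    have hle : ∫ ω, (φ (ΦX k ω) + φ (ΦY k ω)) ∂μ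
        ≤ ∫ ω, (φ (Φ k ω) + φ (ΦXY k ω)) ∂μ := by
      refine integral_mono_ae ((hintX k).add (hintY k)) ((hint k).add (hintXY k)) ?_
      filter_upwards [hgeX k, hgeY k, hsuper k] with ω h1 h2 h3
      exact icx_key hφmono hφconv (hΦnn k ω) h1 h2 (by linarith)
    rw [integral_add (hintX k) (hintY k), integral_add (hint k) (hintXY k),
      hEX k, hEY k, hEXY k] at hle
    linarith
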